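/- Let V : ℝ^N → ℝ be an admissible potential with critical set E. Let x : [0,1] → ℝ^N be measurable with meas({t ∈ [0,1] : x(t) ∉ E}) > 0, and let (x_ε)_{ε>0} be a family in H¹((0,1);ℝ^N) such that x_ε(t) → x(t) for almost every t ∈ [0,1] as ε → 0. Then liminf_{ε→0} J_ε(x_ε) = +∞. -/

import Mathlib

open MeasureTheory Filter Topology

noncomputable section

/-- Euclidean space `ℝ^N`. -/
abbrev Euc (N : ℕ) := EuclideanSpace ℝ (Fin N)

/-- The set of critical points of the potential `V`. -/
def critSet {N : ℕ} (V : Euc N → ℝ) : Set (Euc N) := {x | gradient V x = 0}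

/-- The Hessian `D²V(x)` of `V` at `x`, as the Fréchet derivative of the gradient. -/
def hess {N : ℕ} (V : Euc N → ℝ) (x : Euc N) : Euc N →L[ℝ] Euc N := fderiv ℝ (gradient V) x

/-- The Laplacian `ΔV(x)`, i.e. the trace of the Hessian. -/
def lapl {N : ℕ} (V : Euc N → ℝ) (x : Euc N) : ℝ :=
  LinearMap.trace ℝ (Euc N) (hess V x : Euc N →ₗ[ℝ] Euc N)

/-- The energy `J(y) = ∫_ℝ (½|ẏ|² + ½|∇V(y)|²) ds` of a path `y` with derivative `y'`. -/
def energy {N : ℕ} (V : Euc N → ℝ) (y y' : ℝ → Euc N) : ℝ :=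
  ∫ s, ((1:ℝ)/2 * ‖y' s‖^2 + 1/2 * ‖gradient V (y s)‖^2)

/-- `y ∈ X(xm, xp)`: a locally absolutely continuous path of bounded variation with
derivative `y'` in `L²(ℝ)` and limits `xm`/`xp` at `∓∞`. -/
structure IsTransitionPath {N : ℕ} (V : Euc N → ℝ) (xm xp : Euc N) (y y' : ℝ → Euc N) : Prop where
  ac : ∀ t, y t = y 0 + ∫ s in (0:ℝ)..t, y' s
  memL2 : MemLp y' 2 (volume : Measure ℝ)
  bv : BoundedVariationOn y Set.univ
  tendsto_bot : Tendsto y atBot (𝓝 xm)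
  tendsto_top : Tendsto y atTop (𝓝 xp)

/-- The transition energy `Φ(xm,xp) = inf {J(y) | y ∈ X(xm,xp)}`. -/
def Phi {N : ℕ} (V : Euc N → ℝ) (xm xp : Euc N) : ℝ :=
  sInf {r | ∃ y y', IsTransitionPath V xm xp y y' ∧ r = energy V y y'}

/-- `V` is admissible: `C³`, finitely many critical points, nondegenerate Hessian at
every critical point, and weakly coercive. -/
def Admissible {N : ℕ} (V : Euc N → ℝ) : Prop :=
  ContDiff ℝ 3 V ∧ (critSet V).Finite ∧
  (∀ x ∈ critSet V, ∀ v : Euc N, hess V x v = 0 → v = 0) ∧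
  ∃ R > 0, ∃ c > 0, ∀ x : Euc N, R < ‖x‖ → c ≤ ‖gradient V x‖

/-!
Since `∇V` is continuous, `|∇V(x_ε)|² → |∇V(x)|²` almost everywhere, and the limit is positive on
a set of positive measure. Fatou's lemma then keeps `∫₀¹ |∇V(x_ε)|²` above some `c > 0` for all
small `ε`, so `J_ε(x_ε) ≥ c / (2ε) → ∞`.
-/

theorem ContDiff.continuous_gradient {F : Type*} [NormedAddCommGroup F] [InnerProductSpace ℝ F]
    [CompleteSpace F] {f : F → ℝ} {n : WithTop ℕ∞} (hf : ContDiff ℝ n f) (hn : n ≠ 0) :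
    Continuous (gradient f) :=
  (InnerProductSpace.toDual ℝ F).symm.continuous.comp (hf.continuous_fderiv hn)

theorem continuousOn_Icc_of_eq_add_integral {E : Type*} [NormedAddCommGroup E] [NormedSpace ℝ E]
    {y y' : ℝ → E} {a b : ℝ} (hab : a ≤ b) (hy' : IntervalIntegrable y' volume a b)
    (hy : ∀ t ∈ Set.Icc a b, y t = y a + ∫ s in a..t, y' s) : ContinuousOn y (Set.Icc a b) := by
  have hprim : ContinuousOn (fun t => ∫ s in a..t, y' s) (Set.Icc a b) := by
    simpa only [Set.uIcc_of_le hab] using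
      intervalIntegral.continuousOn_primitive_interval' hy' Set.left_mem_uIcc
  exact (continuousOn_const.add hprim).congr hy

/-- By Fatou's lemma, `liminf ∫ F i ≥ ∫ G > 0`. -/
theorem exists_pos_eventually_le_integral_of_tendsto_ae {α ι : Type*} [MeasurableSpace α]
    {μ : Measure α} {l : Filter ι} [l.IsCountablyGenerated] [l.NeBot]
    {F : ι → α → ℝ} {G : α → ℝ} (hF : ∀ i, Integrable (F i) μ) (hF0 : ∀ i a, 0 ≤ F i a)
    (hlim : ∀ᵐ a ∂μ, Tendsto (fun i => F i a) l (𝓝 (G a))) (hG : 0 < μ {a | G a ≠ 0}) :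
    ∃ c > 0, ∀ᶠ i in l, c ≤ ∫ a, F i a ∂μ := by
  have hG0 : 0 ≤ᵐ[μ] G := by
    filter_upwards [hlim] with a ha using ge_of_tendsto' ha fun i => hF0 i a
  have hGmeas : AEMeasurable G μ :=
    aemeasurable_of_tendsto_metrizable_ae l (fun i => (hF i).aemeasurable) hlim
  have hlintegral_pos : 0 < ∫⁻ a, ENNReal.ofReal (G a) ∂μ := by
    refine pos_iff_ne_zero.2 fun h => hG.ne' (ae_iff.1 ?_)
    filter_upwards [(lintegral_eq_zero_iff' hGmeas.ennreal_ofReal).1 h, hG0] with a ha ha0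
    exact le_antisymm (ENNReal.ofReal_eq_zero.1 ha) ha0
  have hfatou : ∫⁻ a, ENNReal.ofReal (G a) ∂μ
      ≤ liminf (fun i => ∫⁻ a, ENNReal.ofReal (F i a) ∂μ) l := by
    calc ∫⁻ a, ENNReal.ofReal (G a) ∂μ
        = ∫⁻ a, liminf (fun i => ENNReal.ofReal (F i a)) l ∂μ := by
          refine lintegral_congr_ae ?_
          filter_upwards [hlim] with a ha
          exact ((ENNReal.continuous_ofReal.tendsto _).comp ha).liminf_eq.symm
      _ ≤ liminf (fun i => ∫⁻ a, ENNReal.ofReal (F i a) ∂μ) l :=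
          lintegral_liminf_le' fun i => (hF i).aemeasurable.ennreal_ofReal
  obtain ⟨r, hr0, hr⟩ := exists_between hlintegral_pos
  have hr_top : r ≠ ⊤ := (hr.trans_le le_top).ne
  refine ⟨r.toReal, ENNReal.toReal_pos hr0.ne' hr_top, ?_⟩
  filter_upwards [eventually_lt_of_lt_liminf (hr.trans_le hfatou)] with i hi
  rw [integral_eq_lintegral_of_nonneg_ae (ae_of_all _ (hF0 i)) (hF i).aestronglyMeasurable]
  exact ENNReal.toReal_mono (hF i).lintegral_lt_top.ne hi.le

def rescaledEnergy {N : ℕ} (V : Euc N → ℝ) (ε : ℝ) (y y' : ℝ → Euc N) : ℝ :=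
  ∫ s in (0:ℝ)..1, (ε/2 * ‖y' s‖^2 + 1/(2*ε) * ‖gradient V (y s)‖^2)

theorem mul_integral_le_rescaledEnergy {N : ℕ} {V : Euc N → ℝ} {ε : ℝ} {y y' : ℝ → Euc N}
    (hε : 0 < ε) (hy' : MemLp y' 2 (volume.restrict (Set.Ioo (0:ℝ) 1)))
    (hy : IntegrableOn (fun s => ‖gradient V (y s)‖^2) (Set.Icc 0 1)) :
    1/(2*ε) * ∫ s in Set.Icc (0:ℝ) 1, ‖gradient V (y s)‖^2 ≤ rescaledEnergy V ε y y' := by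
  have hkin : IntervalIntegrable (fun s => ‖y' s‖^2) volume 0 1 :=
    (intervalIntegrable_iff_integrableOn_Ioo_of_le zero_le_one).2 hy'.norm.integrable_sq
  have hpot : IntervalIntegrable (fun s => ‖gradient V (y s)‖^2) volume 0 1 :=
    (intervalIntegrable_iff_integrableOn_Icc_of_le zero_le_one).2 hy
  have hkin_nonneg : 0 ≤ ε/2 * ∫ s in (0:ℝ)..1, ‖y' s‖^2 :=
    mul_nonneg (by positivity) (intervalIntegral.integral_nonneg zero_le_one fun s _ => by positivity)
  rw [integral_Icc_eq_integral_Ioc, ← intervalIntegral.integral_of_le zero_le_one, rescaledEnergy,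
    intervalIntegral.integral_add (hkin.const_mul _) (hpot.const_mul _),
    intervalIntegral.integral_const_mul, intervalIntegral.integral_const_mul]
  linarith

theorem statement14_general {N : ℕ} (V : Euc N → ℝ) (hadm : Admissible V)
    (x : ℝ → Euc N)
    (hpos : 0 < volume {t | t ∈ Set.Icc (0:ℝ) 1 ∧ x t ∉ critSet V})
    (xe xe' : ℝ → ℝ → Euc N)
    (hH1 : ∀ ε > 0, (∀ t ∈ Set.Icc (0:ℝ) 1, xe ε t = xe ε 0 + ∫ s in (0:ℝ)..t, xe' ε s) ∧
      MemLp (xe' ε) 2 (volume.restrict (Set.Ioo (0:ℝ) 1)))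
    (hconv : ∀ᵐ t ∂(volume.restrict (Set.Icc (0:ℝ) 1)),
      Filter.Tendsto (fun ε => xe ε t) (𝓝[>] (0:ℝ)) (𝓝 (x t))) :
    Filter.Tendsto
      (fun ε => ∫ s in (0:ℝ)..1, (ε/2 * ‖xe' ε s‖^2 + 1/(2*ε) * ‖gradient V (xe ε s)‖^2))
      (𝓝[>] (0:ℝ)) Filter.atTop := by
  have hgrad : Continuous fun p => ‖gradient V p‖^2 :=
    (hadm.1.continuous_gradient (by norm_num)).norm.pow 2
  have hpot (ε : Set.Ioi (0:ℝ)) :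
      IntegrableOn (fun s => ‖gradient V (xe ε s)‖^2) (Set.Icc 0 1) := by
    have hxe' := (intervalIntegrable_iff_integrableOn_Ioo_of_le zero_le_one).2
      ((hH1 ε ε.2).2.integrable one_le_two)
    exact (hgrad.comp_continuousOn
      (continuousOn_Icc_of_eq_add_integral zero_le_one hxe' (hH1 ε ε.2).1)).integrableOn_Icc
  have hval : Tendsto ((↑) : Set.Ioi (0:ℝ) → ℝ) atBot (𝓝[>] 0) := (map_coe_Ioi_atBot 0).le
  obtain ⟨c, hc, hlow⟩ := exists_pos_eventually_le_integral_of_tendsto_ae (l := atBot) hpot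
    (fun _ _ => by positivity) (hconv.mono fun t ht => (hgrad.tendsto _).comp (ht.comp hval)) (by
      rw [Measure.restrict_apply' measurableSet_Icc]
      convert hpos using 2
      ext t
      simp [critSet, and_comm])
  rw [← map_coe_Ioi_atBot, tendsto_map'_iff]
  refine tendsto_atTop_mono' _ (hlow.mono fun ⟨ε, hε⟩ hcε => ?_)
    ((tendsto_inv_nhdsGT_zero.comp hval).const_mul_atTop (half_pos hc))
  rw [Set.mem_Ioi] at hε
  calc c / 2 * ε⁻¹ = 1/(2*ε) * c := by field_simp
    _ ≤ 1/(2*ε) * ∫ s in Set.Icc (0:ℝ) 1, ‖gradient V (xe ε s)‖^2 := by gcongr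
    _ ≤ rescaledEnergy V ε (xe ε) (xe' ε) :=
      mul_integral_le_rescaledEnergy hε (hH1 ε hε).2 (hpot ⟨ε, hε⟩)

/-- if the a.e. limit `x` of a family `x_ε ∈ H¹((0,1))` is not supported
on the critical set on a set of positive measure, then `J_ε(x_ε) → +∞`
(i.e. `liminf_{ε→0} J_ε(x_ε) = +∞`). -/
theorem statement14 {N : ℕ} (V : Euc N → ℝ) (hadm : Admissible V)
    (x : ℝ → Euc N) (hmeas : Measurable x)
    (hpos : 0 < volume {t | t ∈ Set.Icc (0:ℝ) 1 ∧ x t ∉ critSet V})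
    (xe xe' : ℝ → ℝ → Euc N)
    (hH1 : ∀ ε > 0, (∀ t ∈ Set.Icc (0:ℝ) 1, xe ε t = xe ε 0 + ∫ s in (0:ℝ)..t, xe' ε s) ∧
      MemLp (xe' ε) 2 (volume.restrict (Set.Ioo (0:ℝ) 1)))
    (hconv : ∀ᵐ t ∂(volume.restrict (Set.Icc (0:ℝ) 1)),
      Filter.Tendsto (fun ε => xe ε t) (𝓝[>] (0:ℝ)) (𝓝 (x t))) :
    Filter.Tendsto
      (fun ε => ∫ s in (0:ℝ)..1, (ε/2 * ‖xe' ε s‖^2 + 1/(2*ε) * ‖gradient V (xe ε s)‖^2))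
      (𝓝[>] (0:ℝ)) Filter.atTop :=
  statement14_general V hadm x hpos xe xe' hH1 hconv
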